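/- arXiv:2408.00717 — 7 statements merged into one kernel-verified Lean document; each statement's English description precedes it below -/
import Mathlib

section
/- Let y_1 > y_2 > ... > y_N ≥ 0 be real numbers with N ≥ 2. Then ∑_{j=2}^N ∑_{ℓ=2, ℓ≠j}^N y_j y_ℓ / ((y_1 − y_ℓ)(y_j − y_ℓ)) ≤ 0. -/
/-- For `y 0 > y 1 > ... > y (N-1) ≥ 0` (0-based indexing of `y_1 > ... > y_N ≥ 0`),
the double sum `∑_{j=2}^N ∑_{ℓ=2, ℓ≠j}^N y_j y_ℓ / ((y_1-y_ℓ)(y_j-y_ℓ))` is nonpositive. -/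
theorem double_sum_nonpos (N : ℕ) (hN : 2 ≤ N) (y : ℕ → ℝ)
    (hord : ∀ i j, i < j → j < N → y j < y i) (hnn : 0 ≤ y (N - 1)) :
    ∑ j ∈ Finset.Ioo 0 N, ∑ ℓ ∈ Finset.Ioo 0 N \ {j},
      y j * y ℓ / ((y 0 - y ℓ) * (y j - y ℓ)) ≤ 0 := by
  set t : ℕ → ℕ → ℝ := fun j ℓ => y j * y ℓ / ((y 0 - y ℓ) * (y j - y ℓ)) with ht
  set S := Finset.Ioo 0 N with hSdef
  show ∑ j ∈ S, ∑ ℓ ∈ S \ {j}, t j ℓ ≤ 0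
  have hmem : ∀ j ∈ S, 0 < j ∧ j < N := fun j hj => Finset.mem_Ioo.mp hj
  have hnn' : ∀ j, j < N → 0 ≤ y j := by
    intro j hj
    rcases lt_or_eq_of_le (Nat.le_sub_one_of_lt hj) with h | h
    · exact le_of_lt (lt_of_le_of_lt hnn (hord j (N - 1) h (by omega)))
    · rw [h]; exact hnn
  have key : ∀ j ∈ S, ∀ ℓ ∈ S, j < ℓ → t j ℓ + t ℓ j ≤ 0 := by
    intro j hj ℓ hℓ hjl
    obtain ⟨hj0, hjN⟩ := hmem j hj
    obtain ⟨hl0, hlN⟩ := hmem ℓ hℓ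
    have hab : y ℓ < y j := hord j ℓ hjl hlN
    have hca : y j < y 0 := hord 0 j hj0 hjN
    have hcb : y ℓ < y 0 := hord 0 ℓ hl0 hlN
    have h1 : (0:ℝ) < y 0 - y ℓ := by linarith
    have h2 : (0:ℝ) < y j - y ℓ := by linarith
    have h3 : (0:ℝ) < y 0 - y j := by linarith
    have hne1 : y 0 - y ℓ ≠ 0 := ne_of_gt h1
    have hne2 : y j - y ℓ ≠ 0 := ne_of_gt h2
    have hne3 : y 0 - y j ≠ 0 := ne_of_gt h3
    have hne4 : y ℓ - y j ≠ 0 := by intro h; apply hne2; linarith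
    have heq : t j ℓ + t ℓ j = -(y j * y ℓ) / ((y 0 - y ℓ) * (y 0 - y j)) := by
      simp only [ht]
      field_simp
      ring
    rw [heq]
    apply div_nonpos_of_nonpos_of_nonneg
    · have hj' := hnn' j hjN
      have hl' := hnn' ℓ hlN
      nlinarith
    · positivity
  have hdiag : ∀ j, t j j = 0 := by intro j; simp [ht]
  have step1 : ∀ j ∈ S, ∑ ℓ ∈ S \ {j}, t j ℓ = ∑ ℓ ∈ S, t j ℓ := by
    intro j hj
    rw [Finset.sum_sdiff_eq_sub (Finset.singleton_subset_iff.mpr hj),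
      Finset.sum_singleton, hdiag, sub_zero]
  calc ∑ j ∈ S, ∑ ℓ ∈ S \ {j}, t j ℓ
      = ∑ j ∈ S, ∑ ℓ ∈ S, t j ℓ := Finset.sum_congr rfl step1
    _ = ∑ j ∈ S, ∑ ℓ ∈ S,
        ((if j < ℓ then t j ℓ else 0) + (if ℓ < j then t j ℓ else 0)) := by
        refine Finset.sum_congr rfl fun j _ => Finset.sum_congr rfl fun ℓ _ => ?_
        rcases lt_trichotomy j ℓ with h | h | h
        · rw [if_pos h, if_neg (not_lt_of_gt h), add_zero]
        · subst h; simp [hdiag]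
        · rw [if_neg (not_lt_of_gt h), if_pos h, zero_add]
    _ = (∑ j ∈ S, ∑ ℓ ∈ S, if j < ℓ then t j ℓ else 0)
        + ∑ j ∈ S, ∑ ℓ ∈ S, if ℓ < j then t j ℓ else 0 := by
        simp [Finset.sum_add_distrib]
    _ = (∑ j ∈ S, ∑ ℓ ∈ S, if j < ℓ then t j ℓ else 0)
        + ∑ j ∈ S, ∑ ℓ ∈ S, if j < ℓ then t ℓ j else 0 := by
        congr 1
        rw [Finset.sum_comm]
    _ = ∑ j ∈ S, ∑ ℓ ∈ S,
        ((if j < ℓ then t j ℓ else 0) + (if j < ℓ then t ℓ j else 0)) := by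
        simp [Finset.sum_add_distrib]
    _ ≤ 0 := by
        apply Finset.sum_nonpos
        intro j hj
        apply Finset.sum_nonpos
        intro ℓ hℓ
        split_ifs with h
        · exact key j hj ℓ hℓ h
        · simp
end

section
/- Let y_1 > y_2 > ... > y_N ≥ 0 be real numbers and let 1 ≤ k+1 < N. Then ∑_{i=1}^{k+1} ∑_{j=k+2}^{N} ∑_{ℓ=1, ℓ∉{i,j}}^{N} y_j y_ℓ / ((y_i − y_ℓ)(y_j − y_ℓ)) ≤ 0. -/
private lemma pair1 (a b c : ℝ) (hac : a ≠ c) (hbc : b ≠ c) (hba : b ≠ a) :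
    b * c / ((a - c) * (b - c)) + b * a / ((c - a) * (b - a))
      = -(b ^ 2) / ((b - c) * (b - a)) := by
  have h1 : a - c ≠ 0 := sub_ne_zero.mpr hac
  have h2 : b - c ≠ 0 := sub_ne_zero.mpr hbc
  have h3 : b - a ≠ 0 := sub_ne_zero.mpr hba
  have h4 : c - a ≠ 0 := sub_ne_zero.mpr (Ne.symm hac)
  field_simp
  ring

private lemma pair2 (a b c : ℝ) (hac : a ≠ c) (hbc : b ≠ c) (hab : a ≠ b) :
    b * c / ((a - c) * (b - c)) + c * b / ((a - b) * (c - b))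
      = -(b * c) / ((a - c) * (a - b)) := by
  have h1 : a - c ≠ 0 := sub_ne_zero.mpr hac
  have h2 : b - c ≠ 0 := sub_ne_zero.mpr hbc
  have h3 : a - b ≠ 0 := sub_ne_zero.mpr hab
  have h4 : c - b ≠ 0 := sub_ne_zero.mpr (Ne.symm hbc)
  field_simp
  ring

/-- For `y 0 > y 1 > ... > y (N-1) ≥ 0` (0-based indexing of `y_1 > ... > y_N ≥ 0`)
and `1 ≤ k+1 < N`, the triple sum
`∑_{i=1}^{k+1} ∑_{j=k+2}^{N} ∑_{ℓ∉{i,j}} y_j y_ℓ/((y_i-y_ℓ)(y_j-y_ℓ))` is nonpositive. -/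
theorem triple_sum_nonpos (N k : ℕ) (hk : k + 1 < N) (y : ℕ → ℝ)
    (hord : ∀ i j, i < j → j < N → y j < y i) (hnn : 0 ≤ y (N - 1)) :
    ∑ i ∈ Finset.range (k + 1), ∑ j ∈ Finset.Ico (k + 1) N,
      ∑ ℓ ∈ Finset.range N \ {i, j},
        y j * y ℓ / ((y i - y ℓ) * (y j - y ℓ)) ≤ 0 := by
  set t : ℕ → ℕ → ℕ → ℝ := fun i j ℓ => y j * y ℓ / ((y i - y ℓ) * (y j - y ℓ)) with ht
  have hy0 : ∀ m, m < N → 0 ≤ y m := by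
    intro m hm
    rcases eq_or_lt_of_le (Nat.le_sub_one_of_lt hm) with h | h
    · rw [h]; exact hnn
    · exact hnn.trans (hord m (N - 1) h (by omega)).le
  have hNe : ∀ a b, a < N → b < N → a ≠ b → y a ≠ y b := by
    intro a b ha hb hne
    rcases hne.lt_or_gt with h | h
    · exact (hord a b h hb).ne'
    · exact (hord b a h ha).ne
  -- split the ℓ sum
  have hrw : ∀ i ∈ Finset.range (k + 1), ∀ j ∈ Finset.Ico (k + 1) N,
      ∑ ℓ ∈ Finset.range N \ {i, j}, t i j ℓ
        = (∑ ℓ ∈ Finset.range (k + 1) \ {i}, t i j ℓ)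
          + ∑ ℓ ∈ Finset.Ico (k + 1) N \ {j}, t i j ℓ := by
    intro i hi j hj
    simp only [Finset.mem_range] at hi
    simp only [Finset.mem_Ico] at hj
    have hdisj : Disjoint (Finset.range (k + 1) \ {i}) (Finset.Ico (k + 1) N \ {j}) := by
      rw [Finset.disjoint_left]
      intro a ha hb
      simp only [Finset.mem_sdiff, Finset.mem_range, Finset.mem_Ico,
        Finset.mem_singleton] at ha hb
      omega
    rw [← Finset.sum_union hdisj]
    apply Finset.sum_congr _ (fun _ _ => rfl)
    ext ℓ
    simp only [Finset.mem_sdiff, Finset.mem_union, Finset.mem_range, Finset.mem_Ico,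
      Finset.mem_insert, Finset.mem_singleton]
    omega
  rw [Finset.sum_congr rfl fun i hi => Finset.sum_congr rfl fun j hj => hrw i hi j hj]
  rw [Finset.sum_congr rfl fun i _ => Finset.sum_add_distrib, Finset.sum_add_distrib]
  apply add_nonpos
  · -- part A : ℓ ranges in range (k+1) \ {i}
    have hA : (∑ i ∈ Finset.range (k + 1), ∑ j ∈ Finset.Ico (k + 1) N,
        ∑ ℓ ∈ Finset.range (k + 1) \ {i}, t i j ℓ)
        = ∑ i ∈ Finset.range (k + 1), ∑ ℓ ∈ Finset.range (k + 1) \ {i},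
            ∑ j ∈ Finset.Ico (k + 1) N, t i j ℓ :=
      Finset.sum_congr rfl fun i _ => Finset.sum_comm
    rw [hA]
    set F : ℕ → ℕ → ℝ := fun i ℓ => ∑ j ∈ Finset.Ico (k + 1) N, t i j ℓ with hF
    have hswap : (∑ i ∈ Finset.range (k + 1), ∑ ℓ ∈ Finset.range (k + 1) \ {i}, F i ℓ)
        = ∑ i ∈ Finset.range (k + 1), ∑ ℓ ∈ Finset.range (k + 1) \ {i}, F ℓ i := by
      rw [Finset.sum_comm'
        (s' := fun ℓ => Finset.range (k + 1) \ {ℓ}) (t' := Finset.range (k + 1))]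
      intro x z
      simp only [Finset.mem_sdiff, Finset.mem_range, Finset.mem_singleton]
      omega
    have hdouble : (∑ i ∈ Finset.range (k + 1), ∑ ℓ ∈ Finset.range (k + 1) \ {i}, F i ℓ)
        + (∑ i ∈ Finset.range (k + 1), ∑ ℓ ∈ Finset.range (k + 1) \ {i}, F i ℓ)
        = ∑ i ∈ Finset.range (k + 1), ∑ ℓ ∈ Finset.range (k + 1) \ {i}, (F i ℓ + F ℓ i) := by
      nth_rewrite 2 [hswap]
      rw [← Finset.sum_add_distrib]
      exact Finset.sum_congr rfl fun i _ => (Finset.sum_add_distrib).symm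
    have hle : (∑ i ∈ Finset.range (k + 1), ∑ ℓ ∈ Finset.range (k + 1) \ {i}, (F i ℓ + F ℓ i))
        ≤ 0 := by
      apply Finset.sum_nonpos
      intro i hi
      apply Finset.sum_nonpos
      intro ℓ hℓ
      simp only [Finset.mem_range] at hi
      simp only [Finset.mem_sdiff, Finset.mem_range, Finset.mem_singleton] at hℓ
      rw [hF]
      rw [← Finset.sum_add_distrib]
      apply Finset.sum_nonpos
      intro j hj
      simp only [Finset.mem_Ico] at hj
      have hiN : i < N := by omega
      have hℓN : ℓ < N := by omega
      have e : t i j ℓ + t ℓ j i = -(y j ^ 2) / ((y j - y ℓ) * (y j - y i)) :=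
        pair1 (y i) (y j) (y ℓ) (hNe i ℓ hiN hℓN (by omega)) (hNe j ℓ hj.2 hℓN (by omega))
          (hNe j i hj.2 hiN (by omega))
      rw [e]
      apply div_nonpos_of_nonpos_of_nonneg
      · simp [sq_nonneg]
      · have h1 : y j < y ℓ := hord ℓ j (by omega) hj.2
        have h2 : y j < y i := hord i j (by omega) hj.2
        nlinarith
    linarith
  · -- part B : ℓ ranges in Ico (k+1) N \ {j}
    apply Finset.sum_nonpos
    intro i hi
    simp only [Finset.mem_range] at hi
    set G : ℕ → ℕ → ℝ := fun j ℓ => t i j ℓ with hG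
    have hswap : (∑ j ∈ Finset.Ico (k + 1) N, ∑ ℓ ∈ Finset.Ico (k + 1) N \ {j}, G j ℓ)
        = ∑ j ∈ Finset.Ico (k + 1) N, ∑ ℓ ∈ Finset.Ico (k + 1) N \ {j}, G ℓ j := by
      rw [Finset.sum_comm'
        (s' := fun ℓ => Finset.Ico (k + 1) N \ {ℓ}) (t' := Finset.Ico (k + 1) N)]
      intro x z
      simp only [Finset.mem_sdiff, Finset.mem_Ico, Finset.mem_singleton]
      omega
    have hdouble : (∑ j ∈ Finset.Ico (k + 1) N, ∑ ℓ ∈ Finset.Ico (k + 1) N \ {j}, G j ℓ)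
        + (∑ j ∈ Finset.Ico (k + 1) N, ∑ ℓ ∈ Finset.Ico (k + 1) N \ {j}, G j ℓ)
        = ∑ j ∈ Finset.Ico (k + 1) N, ∑ ℓ ∈ Finset.Ico (k + 1) N \ {j}, (G j ℓ + G ℓ j) := by
      nth_rewrite 2 [hswap]
      rw [← Finset.sum_add_distrib]
      exact Finset.sum_congr rfl fun j _ => (Finset.sum_add_distrib).symm
    have hle : (∑ j ∈ Finset.Ico (k + 1) N, ∑ ℓ ∈ Finset.Ico (k + 1) N \ {j}, (G j ℓ + G ℓ j))
        ≤ 0 := by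
      apply Finset.sum_nonpos
      intro j hj
      apply Finset.sum_nonpos
      intro ℓ hℓ
      simp only [Finset.mem_Ico] at hj
      simp only [Finset.mem_sdiff, Finset.mem_Ico, Finset.mem_singleton] at hℓ
      have hiN : i < N := by omega
      have e : G j ℓ + G ℓ j = -(y j * y ℓ) / ((y i - y ℓ) * (y i - y j)) :=
        pair2 (y i) (y j) (y ℓ) (hNe i ℓ hiN hℓ.1.2 (by omega)) (hNe j ℓ hj.2 hℓ.1.2 (by omega))
          (hNe i j hiN hj.2 (by omega))
      rw [e]
      apply div_nonpos_of_nonpos_of_nonneg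
      · have := hy0 j hj.2
        have := hy0 ℓ hℓ.1.2
        nlinarith
      · have h1 : y ℓ < y i := hord i ℓ (by omega) hℓ.1.2
        have h2 : y j < y i := hord i j (by omega) hj.2
        nlinarith
    linarith
end

section
/- Let N ∈ ℕ and define the one-dimensional differential operators L_x^{(N)} = (x²/2) ∂²_x + ((1 − η/2 − N)x + 1/2) ∂_x acting on smooth functions on (0,∞), where η ∈ ℝ is a fixed parameter. Then the operator identity ∂_x ∘ L_x^{(N+1)} = L_x^{(N)} ∘ ∂_x + (−η/2 − N) ∂_x holds on smooth functions. -/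
/-- The one-dimensional generator `L^{(N)} = (x²/2)∂²_x + ((1 - η/2 - N)x + 1/2)∂_x`. -/
noncomputable def Lop (η : ℝ) (N : ℕ) (f : ℝ → ℝ) (x : ℝ) : ℝ :=
  x ^ 2 / 2 * deriv (deriv f) x + ((1 - η / 2 - (N : ℝ)) * x + 1 / 2) * deriv f x

/-- The intertwining identity `∂_x ∘ L^{(N+1)} = L^{(N)} ∘ ∂_x + (-η/2 - N) ∂_x`
on smooth functions on `(0, ∞)`. -/
theorem Lop_intertwining (η : ℝ) (N : ℕ) (f : ℝ → ℝ) (hf : ContDiff ℝ (⊤ : ℕ∞) f)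
    (x : ℝ) (hx : 0 < x) :
    deriv (Lop η (N + 1) f) x
      = Lop η N (deriv f) x + (-η / 2 - (N : ℝ)) * deriv f x := by
  have hf' : ContDiff ℝ ((⊤:ℕ∞):WithTop ℕ∞) f := hf.of_le (by simp)
  have hc1 := (contDiff_infty_iff_deriv.mp hf').2
  have hc2 := (contDiff_infty_iff_deriv.mp hc1).2
  have hd1 : DifferentiableAt ℝ (deriv f) x :=
    (hc1.differentiable (by simp)) x
  have hd2 : DifferentiableAt ℝ (deriv (deriv f)) x :=
    (hc2.differentiable (by simp)) x
  have hA : DifferentiableAt ℝ (fun x : ℝ => x ^ 2 / 2) x := by fun_prop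
  have hB : DifferentiableAt ℝ
      (fun x : ℝ => (1 - η / 2 - ((N : ℝ) + 1)) * x + 1 / 2) x := by fun_prop
  have key : deriv (Lop η (N + 1) f) x
      = deriv (fun x : ℝ => x ^ 2 / 2) x * deriv (deriv f) x
        + x ^ 2 / 2 * deriv (deriv (deriv f)) x
        + (deriv (fun x : ℝ => (1 - η / 2 - ((N : ℝ) + 1)) * x + 1 / 2) x * deriv f x
          + ((1 - η / 2 - ((N : ℝ) + 1)) * x + 1 / 2) * deriv (deriv f) x) := by
    unfold Lop
    push_cast
    rw [deriv_fun_add (hA.fun_mul hd2) (hB.fun_mul hd1), deriv_fun_mul hA hd2, deriv_fun_mul hB hd1]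
  rw [key]
  have e1 : deriv (fun x : ℝ => x ^ 2 / 2) x = x := by
    simp [deriv_div_const]
  have e2 : deriv (fun x : ℝ => (1 - η / 2 - ((N : ℝ) + 1)) * x + 1 / 2) x
      = (1 - η / 2 - ((N : ℝ) + 1)) := by
    have := (((hasDerivAt_id x).const_mul (1 - η / 2 - ((N : ℝ) + 1))).add_const
      (1 / 2)).deriv
    simpa using this
  rw [e1, e2]
  unfold Lop
  ring
end

section
/- Let η ∈ ℝ, N ∈ ℕ, and define for smooth functions f on the open positive Weyl chamber {x_1 > ... > x_N > 0} the operator L_N f = ∑_i (x_i²/2) ∂²_{x_i} f + ∑_i (−(η/2) x_i + 1/2 + ∑_{j≠i} x_i x_j/(x_i − x_j)) ∂_{x_i} f. Then L_N g = Δ_N(x)^{−1} (∑_{i=1}^N L_{x_i}^{(N)}) (Δ_N(x) g) − λ_N g, where Δ_N(x) = ∏_{i<j}(x_i − x_j), L_x^{(N)} = (x²/2)∂²_x + ((1 − η/2 − N)x + 1/2)∂_x, and λ_N = N(N−1)(1 − 3η/2 − 2N)/6. -/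
/-- Partial derivative in the `i`-th coordinate of a function on `Fin N → ℝ`. -/
noncomputable def pd {N : ℕ} (i : Fin N) (g : (Fin N → ℝ) → ℝ) (x : Fin N → ℝ) : ℝ :=
  deriv (fun t => g (Function.update x i t)) (x i)

/-- The Vandermonde determinant `Δ_N(x) = ∏_{i<j} (x_i - x_j)`. -/
noncomputable def vand {N : ℕ} (x : Fin N → ℝ) : ℝ :=
  ∏ i : Fin N, ∏ j ∈ Finset.Ioi i, (x i - x j)

open Finset


variable {α : Type*} [Fintype α] [DecidableEq α]

omit [Fintype α] in
lemma sum_erase_ite (s : Finset α) (a : α) (h : α → ℝ) :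
    ∑ j ∈ s.erase a, h j = ∑ j ∈ s, if j ≠ a then h j else 0 := by
  rw [← Finset.filter_ne', Finset.sum_filter]

lemma swap2 (f : α → α → ℝ) :
    ∑ i : α, ∑ j ∈ univ.erase i, f i j = ∑ i : α, ∑ j ∈ univ.erase i, f j i := by
  have key : ∀ h : α → α → ℝ,
      ∑ i : α, ∑ j ∈ univ.erase i, h i j = ∑ i : α, ∑ j : α, if j ≠ i then h i j else 0 :=
    fun h => Finset.sum_congr rfl fun i _ => sum_erase_ite _ _ _
  rw [key, key, Finset.sum_comm]
  refine Finset.sum_congr rfl fun j _ => Finset.sum_congr rfl fun i _ => ?_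
  by_cases hij : i = j
  · simp [hij]
  · rw [if_pos (Ne.symm hij), if_pos hij]

lemma cyc3 (f : α → α → α → ℝ) :
    ∑ i : α, ∑ j ∈ univ.erase i, ∑ k ∈ (univ.erase i).erase j, f i j k
      = ∑ i : α, ∑ j ∈ univ.erase i, ∑ k ∈ (univ.erase i).erase j, f j k i := by
  have key : ∀ h : α → α → α → ℝ,
      ∑ i : α, ∑ j ∈ univ.erase i, ∑ k ∈ (univ.erase i).erase j, h i j k
        = ∑ i : α, ∑ j : α, ∑ k : α,
            if j ≠ i then (if k ≠ i then (if k ≠ j then h i j k else 0) else 0) else 0 := by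
    intro h
    refine Finset.sum_congr rfl fun i _ => ?_
    rw [sum_erase_ite]
    refine Finset.sum_congr rfl fun j _ => ?_
    by_cases hj : j ≠ i
    · simp only [if_pos hj]
      rw [sum_erase_ite, sum_erase_ite]
    · simp only [if_neg hj, Finset.sum_const_zero]
  have swap_inner : ∀ F : α → α → α → ℝ,
      ∑ p : α, ∑ q : α, ∑ r : α, F p q r = ∑ q : α, ∑ r : α, ∑ p : α, F p q r := by
    intro F
    rw [Finset.sum_comm]
    exact Finset.sum_congr rfl fun q _ => Finset.sum_comm
  rw [key, key]
  conv_rhs => rw [swap_inner]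
  refine Finset.sum_congr rfl fun a _ => Finset.sum_congr rfl fun b _ =>
    Finset.sum_congr rfl fun c _ => ?_
  by_cases h1 : a = b
  · simp [h1]
  · by_cases h2 : a = c
    · simp [h2]
    · by_cases h3 : b = c
      · simp [h3]
      · simp only [if_pos (show b ≠ a from fun hh => h1 hh.symm),
          if_pos (show c ≠ a from fun hh => h2 hh.symm),
          if_pos (show c ≠ b from fun hh => h3 hh.symm),
          if_pos (show a ≠ c from h2), if_pos (show b ≠ c from h3),
          if_pos (show a ≠ b from h1)]

section
variable {N : ℕ} (x : Fin N → ℝ) (hd : ∀ i j : Fin N, i ≠ j → x i ≠ x j)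

lemma card_erase_real (i : Fin N) : (((univ : Finset (Fin N)).erase i).card : ℝ) = N - 1 := by
  rw [Finset.card_erase_of_mem (mem_univ i), Finset.card_univ, Fintype.card_fin,
    Nat.cast_sub i.pos]
  simp

lemma card_erase2_real (i j : Fin N) (hji : j ≠ i) :
    ((((univ : Finset (Fin N)).erase i).erase j).card : ℝ) = N - 2 := by
  have h2 : 2 ≤ N := by
    have : (1 : ℕ) < Fintype.card (Fin N) := Fintype.one_lt_card_iff_nontrivial.mpr
      ⟨⟨j, i, hji⟩⟩
    simp at this; omega
  rw [Finset.card_erase_of_mem (Finset.mem_erase.mpr ⟨hji, mem_univ j⟩),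
    Finset.card_erase_of_mem (mem_univ i), Finset.card_univ, Fintype.card_fin,
    Nat.cast_sub (by omega : 1 ≤ N - 1), Nat.cast_sub (by omega : 1 ≤ N)]
  push_cast
  ring

lemma sum_S_zero : ∑ i : Fin N, ∑ j ∈ univ.erase i, (x i - x j)⁻¹ = 0 := by
  have h := swap2 (fun i j => (x i - x j)⁻¹)
  have h2 : (∑ i : Fin N, ∑ j ∈ univ.erase i, (x i - x j)⁻¹)
      + (∑ i : Fin N, ∑ j ∈ univ.erase i, (x j - x i)⁻¹) = 0 := by
    rw [← Finset.sum_add_distrib]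
    refine Finset.sum_eq_zero fun i _ => ?_
    rw [← Finset.sum_add_distrib]
    refine Finset.sum_eq_zero fun j _ => ?_
    rw [show x j - x i = -(x i - x j) by ring, inv_neg]
    ring
  linarith

include hd in
lemma sum_xS : ∑ i : Fin N, ∑ j ∈ univ.erase i, x i * (x i - x j)⁻¹
    = ((N : ℝ) ^ 2 - N) / 2 := by
  have h := swap2 (fun i j => x i * (x i - x j)⁻¹)
  have h2 : (∑ i : Fin N, ∑ j ∈ univ.erase i, x i * (x i - x j)⁻¹)
      + (∑ i : Fin N, ∑ j ∈ univ.erase i, x j * (x j - x i)⁻¹)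
      = (N : ℝ) ^ 2 - N := by
    have : ∀ i : Fin N, ∀ j ∈ (univ : Finset (Fin N)).erase i,
        x i * (x i - x j)⁻¹ + x j * (x j - x i)⁻¹ = 1 := by
      intro i j hj
      have hne : x i - x j ≠ 0 := sub_ne_zero.mpr (hd i j (Ne.symm (Finset.mem_erase.mp hj).1))
      have hne' : x j - x i ≠ 0 := by intro hc; apply hne; linarith [sub_eq_zero.mp hc]
      field_simp
      ring
    calc (∑ i : Fin N, ∑ j ∈ univ.erase i, x i * (x i - x j)⁻¹)
          + (∑ i : Fin N, ∑ j ∈ univ.erase i, x j * (x j - x i)⁻¹)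
        = ∑ i : Fin N, ∑ j ∈ univ.erase i, (x i * (x i - x j)⁻¹ + x j * (x j - x i)⁻¹) := by
          rw [← Finset.sum_add_distrib]
          exact Finset.sum_congr rfl fun i _ => (Finset.sum_add_distrib).symm
      _ = ∑ i : Fin N, ∑ j ∈ univ.erase i, (1 : ℝ) := by
          exact Finset.sum_congr rfl fun i _ => Finset.sum_congr rfl fun j hj => this i j hj
      _ = ∑ i : Fin N, ((N : ℝ) - 1) := by
          refine Finset.sum_congr rfl fun i _ => ?_
          rw [Finset.sum_const, nsmul_eq_mul, mul_one, card_erase_real]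
      _ = (N : ℝ) ^ 2 - N := by
          rw [Finset.sum_const, nsmul_eq_mul, Finset.card_univ, Fintype.card_fin]
          ring
  linarith

include hd in
lemma sum_x2T : ∑ i : Fin N, ∑ j ∈ univ.erase i, ∑ k ∈ (univ.erase i).erase j,
      x i ^ 2 * ((x i - x j) * (x i - x k))⁻¹
    = ((N : ℝ) ^ 3 - 3 * N ^ 2 + 2 * N) / 3 := by
  set F : Fin N → Fin N → Fin N → ℝ :=
    fun i j k => x i ^ 2 * ((x i - x j) * (x i - x k))⁻¹ with hF
  have h1 := cyc3 F
  have h2 := cyc3 (fun i j k => F j k i)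
  have h3 : (∑ i : Fin N, ∑ j ∈ univ.erase i, ∑ k ∈ (univ.erase i).erase j, F i j k)
      + (∑ i : Fin N, ∑ j ∈ univ.erase i, ∑ k ∈ (univ.erase i).erase j, F j k i)
      + (∑ i : Fin N, ∑ j ∈ univ.erase i, ∑ k ∈ (univ.erase i).erase j, F k i j)
      = (N : ℝ) ^ 3 - 3 * N ^ 2 + 2 * N := by
    have key : ∀ i : Fin N, ∀ j ∈ (univ : Finset (Fin N)).erase i,
        ∀ k ∈ ((univ : Finset (Fin N)).erase i).erase j,
        F i j k + F j k i + F k i j = 1 := by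
      intro i j hj k hk
      have hji : j ≠ i := (Finset.mem_erase.mp hj).1
      have hki : k ≠ i := (Finset.mem_erase.mp (Finset.mem_erase.mp hk).2).1
      have hkj : k ≠ j := (Finset.mem_erase.mp hk).1
      have d1 : x i - x j ≠ 0 := sub_ne_zero.mpr (hd i j (Ne.symm hji))
      have d2 : x i - x k ≠ 0 := sub_ne_zero.mpr (hd i k (Ne.symm hki))
      have d3 : x j - x k ≠ 0 := sub_ne_zero.mpr (hd j k (Ne.symm hkj))
      have d4 : x j - x i ≠ 0 := fun hc => d1 (by linarith [sub_eq_zero.mp hc])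
      have d5 : x k - x i ≠ 0 := fun hc => d2 (by linarith [sub_eq_zero.mp hc])
      have d6 : x k - x j ≠ 0 := fun hc => d3 (by linarith [sub_eq_zero.mp hc])
      simp only [hF]
      field_simp
      ring
    calc (∑ i : Fin N, ∑ j ∈ univ.erase i, ∑ k ∈ (univ.erase i).erase j, F i j k)
          + (∑ i : Fin N, ∑ j ∈ univ.erase i, ∑ k ∈ (univ.erase i).erase j, F j k i)
          + (∑ i : Fin N, ∑ j ∈ univ.erase i, ∑ k ∈ (univ.erase i).erase j, F k i j)
        = ∑ i : Fin N, ∑ j ∈ univ.erase i, ∑ k ∈ (univ.erase i).erase j,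
            (F i j k + F j k i + F k i j) := by
          rw [← Finset.sum_add_distrib, ← Finset.sum_add_distrib]
          refine Finset.sum_congr rfl fun i _ => ?_
          rw [← Finset.sum_add_distrib, ← Finset.sum_add_distrib]
          refine Finset.sum_congr rfl fun j _ => ?_
          rw [← Finset.sum_add_distrib, ← Finset.sum_add_distrib]
      _ = ∑ i : Fin N, ∑ j ∈ univ.erase i, ∑ k ∈ (univ.erase i).erase j, (1 : ℝ) := by
          refine Finset.sum_congr rfl fun i _ => Finset.sum_congr rfl fun j hj => ?_
          exact Finset.sum_congr rfl fun k hk => key i j hj k hk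
      _ = ∑ i : Fin N, ∑ j ∈ univ.erase i, ((N : ℝ) - 2) := by
          refine Finset.sum_congr rfl fun i _ => Finset.sum_congr rfl fun j hj => ?_
          rw [Finset.sum_const, nsmul_eq_mul, mul_one,
            card_erase2_real _ _ (Finset.mem_erase.mp hj).1]
      _ = ∑ i : Fin N, ((N : ℝ) - 1) * ((N : ℝ) - 2) := by
          refine Finset.sum_congr rfl fun i _ => ?_
          rw [Finset.sum_const, nsmul_eq_mul, card_erase_real]
      _ = (N : ℝ) ^ 3 - 3 * N ^ 2 + 2 * N := by
          rw [Finset.sum_const, nsmul_eq_mul, Finset.card_univ, Fintype.card_fin]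
          ring
  linarith
end



section
variable {N : ℕ} (x : Fin N → ℝ) (i : Fin N)

noncomputable def ff (x : Fin N → ℝ) (i j : Fin N) (t : ℝ) : ℝ :=
  if j < i then x j - t else t - x j

noncomputable def ee {N : ℕ} (i j : Fin N) : ℝ := if j < i then -1 else 1

noncomputable def CC (x : Fin N → ℝ) (i : Fin N) : ℝ :=
  ∏ a ∈ univ.erase i, ∏ b ∈ (Finset.Ioi a).erase i, (x a - x b)

lemma ff_hasDerivAt (j : Fin N) (t : ℝ) : HasDerivAt (ff x i j) (ee i j) t := by
  by_cases h : j < i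
  · rw [show ff x i j = fun t => x j - t from funext fun t => by simp [ff, h],
      show ee i j = -1 from by simp [ee, h]]
    simpa using (hasDerivAt_id t).const_sub (x j)
  · rw [show ff x i j = fun t => t - x j from funext fun t => by simp [ff, h],
      show ee i j = 1 from by simp [ee, h]]
    simpa using (hasDerivAt_id t).sub_const (x j)

lemma vand_update_eq (t : ℝ) :
    vand (Function.update x i t) = (∏ j ∈ univ.erase i, ff x i j t) * CC x i := by
  classical
  unfold vand CC
  rw [← Finset.mul_prod_erase univ _ (mem_univ i)]
  have h1 : ∏ j ∈ Finset.Ioi i, (Function.update x i t i - Function.update x i t j)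
      = ∏ j ∈ Finset.Ioi i, (t - x j) := by
    refine Finset.prod_congr rfl fun j hj => ?_
    rw [Function.update_self, Function.update_of_ne (ne_of_gt (Finset.mem_Ioi.mp hj)) t x]
  have h2 : ∀ a ∈ univ.erase i,
      ∏ b ∈ Finset.Ioi a, (Function.update x i t a - Function.update x i t b)
        = (if a < i then x a - t else 1) * ∏ b ∈ (Finset.Ioi a).erase i, (x a - x b) := by
    intro a ha
    have hai : a ≠ i := (Finset.mem_erase.mp ha).1
    have hu : ∀ b ∈ Finset.Ioi a, Function.update x i t a - Function.update x i t b
        = if b = i then x a - t else x a - x b := by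
      intro b _
      rw [Function.update_of_ne hai]
      by_cases hb : b = i
      · subst hb; rw [Function.update_self, if_pos rfl]
      · rw [Function.update_of_ne hb, if_neg hb]
    rw [Finset.prod_congr rfl hu]
    by_cases hlt : a < i
    · rw [← Finset.mul_prod_erase (Finset.Ioi a) _ (Finset.mem_Ioi.mpr hlt), if_pos rfl,
        if_pos hlt]
      congr 1
      exact Finset.prod_congr rfl fun b hb => if_neg (Finset.mem_erase.mp hb).1
    · rw [if_neg hlt, one_mul,
        Finset.erase_eq_of_notMem (fun hc => hlt (Finset.mem_Ioi.mp hc))]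
      exact Finset.prod_congr rfl fun b hb =>
        if_neg (fun hbi => hlt (Finset.mem_Ioi.mp (hbi ▸ hb)))
  rw [h1, Finset.prod_congr rfl h2, Finset.prod_mul_distrib, ← mul_assoc]
  congr 1
  -- ⊢ (∏ j ∈ Ioi i, (t - x j)) * ∏ a ∈ erase i, (if a < i then x a - t else 1)
  --    = ∏ j ∈ erase i, ff x i j t
  rw [← Finset.prod_filter_mul_prod_filter_not (univ.erase i) (fun j => j < i)
    (fun j => ff x i j t)]
  have e1 : ∏ j ∈ (univ.erase i).filter (fun j => j < i), ff x i j t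
      = ∏ a ∈ univ.erase i, (if a < i then x a - t else 1) := by
    rw [Finset.prod_filter]
    refine Finset.prod_congr rfl fun j _ => ?_
    by_cases hj : j < i
    · rw [if_pos hj, if_pos hj, show ff x i j t = x j - t from by simp [ff, hj]]
    · rw [if_neg hj, if_neg hj]
  have e2 : (univ.erase i).filter (fun j => ¬ j < i) = Finset.Ioi i := by
    ext j
    simp only [Finset.mem_filter, Finset.mem_erase, Finset.mem_univ, and_true, true_and,
      Finset.mem_Ioi]
    constructor
    · rintro ⟨hne, hnlt⟩; exact lt_of_le_of_ne (not_lt.mp hnlt) (Ne.symm hne)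
    · intro hlt; exact ⟨ne_of_gt hlt, not_lt.mpr (le_of_lt hlt)⟩
  have e3 : ∏ j ∈ (univ.erase i).filter (fun j => ¬ j < i), ff x i j t
      = ∏ j ∈ Finset.Ioi i, (t - x j) := by
    rw [e2]
    refine Finset.prod_congr rfl fun j hj => ?_
    simp [ff, not_lt.mpr (le_of_lt (Finset.mem_Ioi.mp hj))]
  rw [e1, e3, mul_comm]

noncomputable def D1 (x : Fin N → ℝ) (i : Fin N) (t : ℝ) : ℝ :=
  (∑ j ∈ univ.erase i, (∏ k ∈ (univ.erase i).erase j, ff x i k t) * ee i j) * CC x i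

noncomputable def D2 (x : Fin N → ℝ) (i : Fin N) (t : ℝ) : ℝ :=
  (∑ j ∈ univ.erase i, (∑ k ∈ (univ.erase i).erase j,
      (∏ l ∈ ((univ.erase i).erase j).erase k, ff x i l t) * ee i k) * ee i j) * CC x i

lemma prod_ff_hasDerivAt (s : Finset (Fin N)) (t : ℝ) :
    HasDerivAt (fun t => ∏ j ∈ s, ff x i j t)
      (∑ j ∈ s, (∏ k ∈ s.erase j, ff x i k t) * ee i j) t := by
  have h := HasDerivAt.fun_finsetProd (u := s) (f := fun j => ff x i j)
    (f' := fun j => ee i j) (x := t) (fun j _ => ff_hasDerivAt x i j t)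
  simpa [smul_eq_mul] using h

lemma phi_hasDerivAt (t : ℝ) :
    HasDerivAt (fun t => vand (Function.update x i t)) (D1 x i t) t := by
  have heq : (fun t => vand (Function.update x i t))
      = fun t => (∏ j ∈ univ.erase i, ff x i j t) * CC x i := funext (vand_update_eq x i)
  rw [heq]
  exact (prod_ff_hasDerivAt x i (univ.erase i) t).mul_const (CC x i)

lemma D1_hasDerivAt (t : ℝ) : HasDerivAt (D1 x i) (D2 x i t) t := by
  unfold D1 D2
  exact (HasDerivAt.fun_sum fun j _ =>
    (prod_ff_hasDerivAt x i ((univ.erase i).erase j) t).mul_const (ee i j)).mul_const _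

lemma ff_eval (j : Fin N) : ff x i j (x i) = ee i j * (x i - x j) := by
  unfold ff ee
  by_cases h : j < i
  · rw [if_pos h, if_pos h]; ring
  · rw [if_neg h, if_neg h]; ring

lemma div_ff_mul_ee (Q : ℝ) (j : Fin N) :
    Q / ff x i j (x i) * ee i j = Q * (x i - x j)⁻¹ := by
  rw [ff_eval]
  unfold ee
  by_cases h : j < i
  · rw [if_pos h, neg_one_mul, div_neg, mul_neg_one, neg_neg, div_eq_mul_inv]
  · rw [if_neg h, one_mul, mul_one, div_eq_mul_inv]

variable {x i} (hd : ∀ j : Fin N, j ≠ i → x i ≠ x j)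

include hd in
lemma ff_ne (j : Fin N) (hj : j ≠ i) : ff x i j (x i) ≠ 0 := by
  rw [ff_eval]
  refine mul_ne_zero ?_ (sub_ne_zero.mpr (hd j hj))
  unfold ee
  by_cases h : j < i
  · rw [if_pos h]; norm_num
  · rw [if_neg h]; norm_num

include hd in
lemma sum_eval (s' : Finset (Fin N)) (hs' : ∀ j ∈ s', j ≠ i) :
    ∑ j ∈ s', (∏ k ∈ s'.erase j, ff x i k (x i)) * ee i j
      = (∏ k ∈ s', ff x i k (x i)) * ∑ j ∈ s', (x i - x j)⁻¹ := by
  rw [Finset.mul_sum]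
  refine Finset.sum_congr rfl fun j hj => ?_
  have hprod : ∏ k ∈ s'.erase j, ff x i k (x i)
      = (∏ k ∈ s', ff x i k (x i)) / ff x i j (x i) := by
    rw [eq_div_iff (ff_ne hd j (hs' j hj)), Finset.prod_erase_mul s' _ hj]
  rw [hprod, div_ff_mul_ee]

omit hd in
lemma vand_eq_QC : vand x = (∏ k ∈ univ.erase i, ff x i k (x i)) * CC x i := by
  have h := vand_update_eq x i (x i)
  rwa [Function.update_eq_self] at h

include hd in
lemma D1_eval : D1 x i (x i) = vand x * ∑ j ∈ univ.erase i, (x i - x j)⁻¹ := by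
  unfold D1
  rw [sum_eval hd _ (fun j hj => (Finset.mem_erase.mp hj).1), vand_eq_QC (x := x) (i := i)]
  ring

include hd in
lemma D2_eval : D2 x i (x i)
    = vand x * ∑ j ∈ univ.erase i, ∑ k ∈ (univ.erase i).erase j,
        ((x i - x j) * (x i - x k))⁻¹ := by
  unfold D2
  have hinner : ∀ j ∈ (univ : Finset (Fin N)).erase i,
      (∑ k ∈ (univ.erase i).erase j,
          (∏ l ∈ ((univ.erase i).erase j).erase k, ff x i l (x i)) * ee i k) * ee i j
        = (∏ k ∈ univ.erase i, ff x i k (x i))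
            * ((x i - x j)⁻¹ * ∑ k ∈ (univ.erase i).erase j, (x i - x k)⁻¹) := by
    intro j hj
    rw [sum_eval hd _ (fun k hk => (Finset.mem_erase.mp (Finset.mem_erase.mp hk).2).1)]
    have hprod : ∏ k ∈ ((univ : Finset (Fin N)).erase i).erase j, ff x i k (x i)
        = (∏ k ∈ (univ : Finset (Fin N)).erase i, ff x i k (x i)) / ff x i j (x i) := by
      rw [eq_div_iff (ff_ne hd j (Finset.mem_erase.mp hj).1),
        Finset.prod_erase_mul _ _ hj]
    rw [hprod, mul_right_comm, div_ff_mul_ee]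
    ring
  rw [Finset.sum_congr rfl hinner, ← Finset.mul_sum, vand_eq_QC (x := x) (i := i)]
  have hsum : ∑ j ∈ univ.erase i, (x i - x j)⁻¹ * ∑ k ∈ (univ.erase i).erase j, (x i - x k)⁻¹
      = ∑ j ∈ univ.erase i, ∑ k ∈ (univ.erase i).erase j, ((x i - x j) * (x i - x k))⁻¹ :=
    Finset.sum_congr rfl fun j _ => by
      rw [Finset.mul_sum]
      exact Finset.sum_congr rfl fun k _ => (mul_inv _ _).symm
  rw [hsum]
  ring
end


lemma pd_pd {N : ℕ} (h : (Fin N → ℝ) → ℝ) (x : Fin N → ℝ) (i : Fin N) :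
    pd i (pd i h) x = deriv (deriv (fun t => h (Function.update x i t))) (x i) := by
  show deriv (fun t => pd i h (Function.update x i t)) (x i) = _
  congr 1
  funext t
  show deriv (fun s => h (Function.update (Function.update x i t) i s))
      (Function.update x i t i) = _
  rw [Function.update_self]
  congr 1
  funext s
  rw [Function.update_idem]


/-- Doob h-transform identity: the `N`-particle generator equals the Vandermonde
h-transform of `N` independent one-dimensional `L^{(N)}`-diffusions minus `λ_N`. -/
theorem generator_doob_transform (η : ℝ) (N : ℕ) (g : (Fin N → ℝ) → ℝ)
    (hg : ContDiff ℝ (⊤ : ℕ∞) g) (x : Fin N → ℝ)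
    (hord : ∀ i j : Fin N, i < j → x j < x i) (hpos : ∀ i, 0 < x i) :
    (∑ i : Fin N, (x i) ^ 2 / 2 * pd i (pd i g) x
        + ∑ i : Fin N, (-(η / 2) * x i + 1 / 2
            + ∑ j ∈ Finset.univ \ {i}, x i * x j / (x i - x j)) * pd i g x)
      = (vand x)⁻¹ *
          (∑ i : Fin N,
            ((x i) ^ 2 / 2 * pd i (pd i (fun z => vand z * g z)) x
              + ((1 - η / 2 - (N : ℝ)) * x i + 1 / 2) * pd i (fun z => vand z * g z) x))
        - ((N : ℝ) * ((N : ℝ) - 1) * (1 - 3 * η / 2 - 2 * (N : ℝ)) / 6) * g x := by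
  classical
  have hg' : ContDiff ℝ (⊤ : ℕ∞) g := hg.of_le (by simp)
  have hd2 : ∀ i j : Fin N, i ≠ j → x i ≠ x j := by
    intro i j hij
    rcases lt_trichotomy i j with h | h | h
    · exact ne_of_gt (hord i j h)
    · exact absurd h hij
    · exact ne_of_lt (hord j i h)
  have hdi : ∀ i : Fin N, ∀ j : Fin N, j ≠ i → x i ≠ x j :=
    fun i j h => hd2 i j (Ne.symm h)
  have hV : vand x ≠ 0 := by
    unfold vand
    rw [Finset.prod_ne_zero_iff]
    intro i _
    rw [Finset.prod_ne_zero_iff]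
    intro j hj
    exact sub_ne_zero.mpr (hd2 i j (ne_of_lt (Finset.mem_Ioi.mp hj)))
  -- one-variable slices of g
  have hψ : ∀ i : Fin N, ContDiff ℝ (⊤ : ℕ∞) (fun t => g (Function.update x i t)) :=
    fun i => hg'.comp (contDiff_update _ x i)
  have hψd : ∀ i : Fin N, Differentiable ℝ (fun t => g (Function.update x i t)) :=
    fun i => (contDiff_infty_iff_deriv.mp (hψ i)).1
  have hψ'd : ∀ i : Fin N, Differentiable ℝ (deriv (fun t => g (Function.update x i t))) :=
    fun i => (contDiff_infty_iff_deriv.mp (contDiff_infty_iff_deriv.mp (hψ i)).2).1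
  have hmul : ∀ (i : Fin N) (t : ℝ),
      HasDerivAt (fun t => vand (Function.update x i t) * g (Function.update x i t))
        (D1 x i t * g (Function.update x i t)
          + vand (Function.update x i t) * deriv (fun t => g (Function.update x i t)) t) t :=
    fun i t => (phi_hasDerivAt x i t).mul ((hψd i t).hasDerivAt)
  have k1 : ∀ i : Fin N, pd i (fun z => vand z * g z) x
      = vand x * ((∑ j ∈ univ.erase i, (x i - x j)⁻¹) * g x + pd i g x) := by
    intro i
    have h0 : pd i (fun z => vand z * g z) x
        = deriv (fun t => vand (Function.update x i t) * g (Function.update x i t)) (x i) := rfl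
    have h1 : pd i g x = deriv (fun t => g (Function.update x i t)) (x i) := rfl
    rw [h0, h1, (hmul i (x i)).deriv, D1_eval (hdi i), Function.update_eq_self]
    ring
  have hderiv_eq : ∀ i : Fin N,
      deriv (fun t => vand (Function.update x i t) * g (Function.update x i t))
        = fun t => D1 x i t * g (Function.update x i t)
            + vand (Function.update x i t) * deriv (fun t => g (Function.update x i t)) t :=
    fun i => funext fun t => (hmul i t).deriv
  have k2 : ∀ i : Fin N, pd i (pd i (fun z => vand z * g z)) x
      = vand x * ((∑ j ∈ univ.erase i, ∑ k ∈ (univ.erase i).erase j,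
            ((x i - x j) * (x i - x k))⁻¹) * g x
          + 2 * (∑ j ∈ univ.erase i, (x i - x j)⁻¹) * pd i g x + pd i (pd i g) x) := by
    intro i
    have h0 : pd i (pd i (fun z => vand z * g z)) x
        = deriv (deriv (fun t => vand (Function.update x i t) * g (Function.update x i t)))
            (x i) := pd_pd _ x i
    have h1 : pd i g x = deriv (fun t => g (Function.update x i t)) (x i) := rfl
    have h2 : pd i (pd i g) x
        = deriv (deriv (fun t => g (Function.update x i t))) (x i) := pd_pd _ x i
    have h3 : HasDerivAt (fun t => D1 x i t * g (Function.update x i t)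
          + vand (Function.update x i t) * deriv (fun t => g (Function.update x i t)) t)
        (D2 x i (x i) * g (Function.update x i (x i))
            + D1 x i (x i) * deriv (fun t => g (Function.update x i t)) (x i)
          + (D1 x i (x i) * deriv (fun t => g (Function.update x i t)) (x i)
            + vand (Function.update x i (x i))
                * deriv (deriv (fun t => g (Function.update x i t))) (x i))) (x i) :=
      ((D1_hasDerivAt x i (x i)).mul ((hψd i (x i)).hasDerivAt)).add
        ((phi_hasDerivAt x i (x i)).mul ((hψ'd i (x i)).hasDerivAt))
    rw [h0, hderiv_eq i, h3.deriv, D1_eval (hdi i), D2_eval (hdi i),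
      Function.update_eq_self, h1, h2]
    ring
  have hsum : ∑ i : Fin N,
      ((x i) ^ 2 / 2 * pd i (pd i (fun z => vand z * g z)) x
        + ((1 - η / 2 - (N : ℝ)) * x i + 1 / 2) * pd i (fun z => vand z * g z) x)
      = vand x * ∑ i : Fin N,
          ((x i) ^ 2 / 2 * ((∑ j ∈ univ.erase i, ∑ k ∈ (univ.erase i).erase j,
                ((x i - x j) * (x i - x k))⁻¹) * g x
              + 2 * (∑ j ∈ univ.erase i, (x i - x j)⁻¹) * pd i g x + pd i (pd i g) x)
            + ((1 - η / 2 - (N : ℝ)) * x i + 1 / 2)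
              * ((∑ j ∈ univ.erase i, (x i - x j)⁻¹) * g x + pd i g x)) := by
    rw [Finset.mul_sum]
    refine Finset.sum_congr rfl fun i _ => ?_
    rw [k1 i, k2 i]
    ring
  rw [hsum, inv_mul_cancel_left₀ hV]
  have H1 : ∀ i : Fin N, (x i) ^ 2 * (∑ j ∈ univ.erase i, (x i - x j)⁻¹)
      + ((1 - η / 2 - (N : ℝ)) * x i + 1 / 2)
      = -(η / 2) * x i + 1 / 2 + ∑ j ∈ Finset.univ \ {i}, x i * x j / (x i - x j) := by
    intro i
    rw [Finset.sdiff_singleton_eq_erase, Finset.mul_sum]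
    have per : ∀ j ∈ (univ : Finset (Fin N)).erase i,
        x i ^ 2 * (x i - x j)⁻¹ = x i + x i * x j / (x i - x j) := by
      intro j hj
      have hne : x i - x j ≠ 0 := sub_ne_zero.mpr (hdi i j (Finset.mem_erase.mp hj).1)
      field_simp
      ring
    rw [Finset.sum_congr rfl per, Finset.sum_add_distrib, Finset.sum_const, nsmul_eq_mul,
      card_erase_real]
    ring
  have H2 : ∑ i : Fin N, ((x i) ^ 2 / 2 * (∑ j ∈ univ.erase i, ∑ k ∈ (univ.erase i).erase j,
          ((x i - x j) * (x i - x k))⁻¹)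
        + ((1 - η / 2 - (N : ℝ)) * x i + 1 / 2) * (∑ j ∈ univ.erase i, (x i - x j)⁻¹))
      = (N : ℝ) * ((N : ℝ) - 1) * (1 - 3 * η / 2 - 2 * (N : ℝ)) / 6 := by
    have hA := sum_x2T x hd2
    have hB := sum_xS x hd2
    have hC := sum_S_zero x
    calc ∑ i : Fin N, ((x i) ^ 2 / 2 * (∑ j ∈ univ.erase i, ∑ k ∈ (univ.erase i).erase j,
            ((x i - x j) * (x i - x k))⁻¹)
          + ((1 - η / 2 - (N : ℝ)) * x i + 1 / 2) * (∑ j ∈ univ.erase i, (x i - x j)⁻¹))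
        = ∑ i : Fin N, ((1 / 2) * (∑ j ∈ univ.erase i, ∑ k ∈ (univ.erase i).erase j,
              x i ^ 2 * ((x i - x j) * (x i - x k))⁻¹)
            + ((1 - η / 2 - (N : ℝ)) * (∑ j ∈ univ.erase i, x i * (x i - x j)⁻¹)
              + (1 / 2) * (∑ j ∈ univ.erase i, (x i - x j)⁻¹))) := by
          refine Finset.sum_congr rfl fun i _ => ?_
          have t1 : x i ^ 2 * (∑ j ∈ univ.erase i, ∑ k ∈ (univ.erase i).erase j,
                ((x i - x j) * (x i - x k))⁻¹)
              = ∑ j ∈ univ.erase i, ∑ k ∈ (univ.erase i).erase j,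
                  x i ^ 2 * ((x i - x j) * (x i - x k))⁻¹ := by
            rw [Finset.mul_sum]
            exact Finset.sum_congr rfl fun j _ => Finset.mul_sum _ _ _
          have t2 : x i * (∑ j ∈ univ.erase i, (x i - x j)⁻¹)
              = ∑ j ∈ univ.erase i, x i * (x i - x j)⁻¹ := Finset.mul_sum _ _ _
          rw [← t1, ← t2]
          ring
      _ = (1 / 2) * (∑ i : Fin N, ∑ j ∈ univ.erase i, ∑ k ∈ (univ.erase i).erase j,
              x i ^ 2 * ((x i - x j) * (x i - x k))⁻¹)
          + ((1 - η / 2 - (N : ℝ)) * (∑ i : Fin N, ∑ j ∈ univ.erase i, x i * (x i - x j)⁻¹)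
            + (1 / 2) * (∑ i : Fin N, ∑ j ∈ univ.erase i, (x i - x j)⁻¹)) := by
          rw [Finset.sum_add_distrib, Finset.sum_add_distrib, ← Finset.mul_sum,
            ← Finset.mul_sum, ← Finset.mul_sum]
      _ = (N : ℝ) * ((N : ℝ) - 1) * (1 - 3 * η / 2 - 2 * (N : ℝ)) / 6 := by
          rw [hA, hB, hC]
          ring
  have perW : ∀ i : Fin N,
      (x i) ^ 2 / 2 * ((∑ j ∈ univ.erase i, ∑ k ∈ (univ.erase i).erase j,
            ((x i - x j) * (x i - x k))⁻¹) * g x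
          + 2 * (∑ j ∈ univ.erase i, (x i - x j)⁻¹) * pd i g x + pd i (pd i g) x)
        + ((1 - η / 2 - (N : ℝ)) * x i + 1 / 2)
          * ((∑ j ∈ univ.erase i, (x i - x j)⁻¹) * g x + pd i g x)
      = (x i) ^ 2 / 2 * pd i (pd i g) x
        + (-(η / 2) * x i + 1 / 2
            + ∑ j ∈ Finset.univ \ {i}, x i * x j / (x i - x j)) * pd i g x
        + ((x i) ^ 2 / 2 * (∑ j ∈ univ.erase i, ∑ k ∈ (univ.erase i).erase j,
              ((x i - x j) * (x i - x k))⁻¹)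
            + ((1 - η / 2 - (N : ℝ)) * x i + 1 / 2)
              * (∑ j ∈ univ.erase i, (x i - x j)⁻¹)) * g x := by
    intro i
    linear_combination pd i g x * H1 i
  rw [Finset.sum_congr rfl fun i _ => perW i, Finset.sum_add_distrib,
    Finset.sum_add_distrib, ← Finset.sum_mul, H2]
  ring
end

section
/- For each N, let x^{(N)} = (x_1^{(N)} ≥ ... ≥ x_N^{(N)} ≥ 0) be nonnegative decreasing tuples such that, as N → ∞: (i) x_i^{(N)}/N → x_i for each fixed i, where x_1 ≥ x_2 ≥ ... ≥ 0; and (ii) N^{−1} ∑_{i=1}^N x_i^{(N)} → γ with ∑_i x_i ≤ γ. Then the polynomials U_N(z) = ∏_{j=1}^N (1 − (x_j^{(N)}/N) z) converge uniformly on compact subsets of ℂ to the entire function E_+(z) = e^{−γz} ∏_{j=1}^∞ e^{x_j z}(1 − x_j z). -/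
/-!
Write `E(w) = e^w (1 - w)` and let `a^{(N)} = (x^{(N)}_1/N, …, x^{(N)}_N/N, 0, 0, …)`, with sum
`s_N → γ`. Then `U_N(z) = e^{-s_N z} ∏_i E(a^{(N)}_i z)`. A decreasing nonnegative tuple satisfies
`a^{(N)}_i ≤ s_N / (i + 1)`, and `|E(w) - 1| ≤ |w|² e^{|w|}`, so for `z` in a bounded set the
factors `E(a^{(N)}_i z) - 1` are dominated by `C / (i + 1)²` uniformly in `N`. Tannery's theorem
for infinite products then gives `U_N(z') → E_+(z)` as `N → ∞` and `z' → z` jointly, which is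
locally uniform convergence.
-/

open Filter Topology

noncomputable def weierstrassFactorOne (w : ℂ) : ℂ := Complex.exp w * (1 - w)

lemma continuous_weierstrassFactorOne : Continuous weierstrassFactorOne := by
  unfold weierstrassFactorOne
  fun_prop

lemma hasDerivAt_weierstrassFactorOne_ofReal_mul (w : ℂ) (t : ℝ) :
    HasDerivAt (fun s : ℝ => weierstrassFactorOne (s * w))
      (-t * w ^ 2 * Complex.exp (t * w)) t := by
  have hlin : HasDerivAt (fun s : ℝ => (s : ℂ) * w) w t := by
    simpa using (Complex.ofRealCLM.hasDerivAt (x := t)).mul_const w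
  exact (hlin.cexp.mul (hlin.const_sub 1)).congr_deriv (by ring)

lemma norm_weierstrassFactorOne_sub_one_le (w : ℂ) :
    ‖weierstrassFactorOne w - 1‖ ≤ ‖w‖ ^ 2 * Real.exp ‖w‖ := by
  have h := norm_image_sub_le_of_norm_deriv_le_segment_01'
    (f := fun s : ℝ => weierstrassFactorOne (s * w)) (C := ‖w‖ ^ 2 * Real.exp ‖w‖)
    (fun t _ => (hasDerivAt_weierstrassFactorOne_ofReal_mul w t).hasDerivWithinAt)
    fun t ht => ?_
  · simpa [weierstrassFactorOne] using h
  obtain ⟨ht0, ht1⟩ := ht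
  rw [norm_mul, norm_mul, norm_neg, norm_pow, Complex.norm_real, Real.norm_of_nonneg ht0]
  calc t * ‖w‖ ^ 2 * ‖Complex.exp (t * w)‖ ≤ 1 * ‖w‖ ^ 2 * Real.exp ‖w‖ := by
        gcongr
        refine (Complex.norm_exp_le_exp_norm _).trans (Real.exp_le_exp.2 ?_)
        rw [norm_mul, Complex.norm_real, Real.norm_of_nonneg ht0]
        nlinarith [norm_nonneg w]
    _ = ‖w‖ ^ 2 * Real.exp ‖w‖ := by rw [one_mul]

lemma prod_one_sub_mul_eq_exp_mul_prod_weierstrassFactorOne {ι : Type*} (s : Finset ι)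
    (c : ι → ℂ) (z : ℂ) : ∏ i ∈ s, (1 - c i * z) =
      Complex.exp (-(∑ i ∈ s, c i) * z) * ∏ i ∈ s, weierstrassFactorOne (c i * z) := by
  simp only [weierstrassFactorOne, Finset.prod_mul_distrib, ← Complex.exp_sum, ← mul_assoc,
    ← Complex.exp_add, Finset.sum_mul, neg_mul, neg_add_cancel, Complex.exp_zero, one_mul]

lemma summable_div_nat_add_one_sq (c : ℝ) : Summable fun k : ℕ => (c / (k + 1)) ^ 2 := by
  have h := (summable_nat_add_iff 1).2 (Real.summable_one_div_nat_pow.2 one_lt_two)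
  push_cast at h
  simpa [div_pow, div_eq_mul_one_div (c ^ 2)] using h.mul_left (c ^ 2)

theorem tendsto_tprod_weierstrassFactorOne {ι : Type*} {l : Filter ι} {a : ι → ℕ → ℝ}
    {x : ℕ → ℝ} {w : ι → ℂ} {z : ℂ} {C : ℝ} (ha : ∀ k, Tendsto (a · k) l (𝓝 (x k)))
    (hw : Tendsto w l (𝓝 z)) (hC : ∀ᶠ n in l, ∀ k, |a n k| ≤ C / (k + 1)) :
    Tendsto (fun n => ∏' k, weierstrassFactorOne (a n k * w n)) l
      (𝓝 (∏' k, weierstrassFactorOne (x k * z))) := by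
  set R := ‖z‖ + 1
  have hwR : ∀ᶠ n in l, ‖w n‖ ≤ R := hw.norm.eventually (eventually_le_nhds (lt_add_one _))
  have h := tendsto_tprod_one_add_of_dominated_convergence
    (f := fun n k => weierstrassFactorOne (a n k * w n) - 1)
    (g := fun k => weierstrassFactorOne (x k * z) - 1)
    ((summable_div_nat_add_one_sq (C * R)).mul_right (Real.exp (C * R)))
    (fun k => ((continuous_weierstrassFactorOne.tendsto _).comp
      ((ha k).ofReal.mul hw)).sub_const 1) ?_
  · simpa only [add_sub_cancel] using h
  filter_upwards [hC, hwR] with n hn hnR k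
  have hk : ‖(a n k : ℂ) * w n‖ ≤ C * R / (k + 1) := by
    rw [norm_mul, Complex.norm_real, Real.norm_eq_abs, mul_div_right_comm]
    exact mul_le_mul (hn k) hnR (norm_nonneg _) ((abs_nonneg _).trans (hn k))
  have hCR : C * R / (k + 1) ≤ C * R := by
    refine div_le_self ?_ (by simp)
    have := (norm_nonneg _).trans hk
    rwa [le_div_iff₀ (by positivity), zero_mul] at this
  refine (norm_weierstrassFactorOne_sub_one_le _).trans ?_
  gcongr
  exact hk.trans hCR

noncomputable def scaledTuple (b : ℕ → ℝ) (N i : ℕ) : ℝ := if i < N then b i / N else 0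

lemma tendsto_scaledTuple {b : ℕ → ℕ → ℝ} {i : ℕ} {y : ℝ}
    (h : Tendsto (fun N : ℕ => b N i / N) atTop (𝓝 y)) :
    Tendsto (fun N => scaledTuple (b N) N i) atTop (𝓝 y) :=
  h.congr' ((eventually_gt_atTop i).mono fun _ hN => (if_pos hN).symm)

lemma prod_range_one_sub_mul_eq_exp_mul_tprod (b : ℕ → ℝ) (N : ℕ) (z : ℂ) :
    ∏ i ∈ Finset.range N, (1 - ((b i / N : ℝ) : ℂ) * z) =
      Complex.exp (-(((∑ i ∈ Finset.range N, b i) / N : ℝ) : ℂ) * z) *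
        ∏' i, weierstrassFactorOne (scaledTuple b N i * z) := by
  rw [prod_one_sub_mul_eq_exp_mul_prod_weierstrassFactorOne,
    tprod_eq_prod (s := Finset.range N) fun i hi => by
      simp [scaledTuple, Finset.mem_range.not.1 hi, weierstrassFactorOne]]
  refine congr_arg₂ _ ?_ (Finset.prod_congr rfl fun i hi => ?_)
  · simp [Finset.sum_div]
  · simp [scaledTuple, Finset.mem_range.1 hi]

lemma succ_mul_le_sum_range_of_antitone {b : ℕ → ℝ} {N k : ℕ}
    (hanti : ∀ i j, i ≤ j → j < N → b j ≤ b i) (hnn : ∀ i, i < N → 0 ≤ b i) (hk : k < N) :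
    (k + 1) * b k ≤ ∑ i ∈ Finset.range N, b i :=
  calc (k + 1) * b k = ∑ _i ∈ Finset.range (k + 1), b k := by simp
    _ ≤ ∑ i ∈ Finset.range (k + 1), b i :=
      Finset.sum_le_sum fun i hi => hanti i k (Finset.mem_range_succ_iff.1 hi) hk
    _ ≤ ∑ i ∈ Finset.range N, b i :=
      Finset.sum_le_sum_of_subset_of_nonneg (Finset.range_subset_range.2 hk)
        fun i hi _ => hnn i (Finset.mem_range.1 hi)

lemma abs_scaledTuple_le_div {b : ℕ → ℝ} {N : ℕ}
    (hanti : ∀ i j, i ≤ j → j < N → b j ≤ b i) (hnn : ∀ i, i < N → 0 ≤ b i) (k : ℕ) :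
    |scaledTuple b N k| ≤ (∑ i ∈ Finset.range N, b i) / N / (k + 1) := by
  rw [le_div_iff₀ (by positivity)]
  by_cases hk : k < N
  · rw [scaledTuple, if_pos hk, abs_of_nonneg (div_nonneg (hnn k hk) N.cast_nonneg),
      div_mul_eq_mul_div, mul_comm]
    exact div_le_div_of_nonneg_right (succ_mul_le_sum_range_of_antitone hanti hnn hk)
      N.cast_nonneg
  · rw [scaledTuple, if_neg hk, abs_zero, zero_mul]
    exact div_nonneg (Finset.sum_nonneg fun i hi => hnn i (Finset.mem_range.1 hi))
      N.cast_nonneg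

theorem charPoly_tendstoLocallyUniformly_general
    (xN : ℕ → ℕ → ℝ) (x : ℕ → ℝ) (γ : ℝ)
    (hNdec : ∀ N, ∀ i j, i ≤ j → j < N → xN N j ≤ xN N i)
    (hNnn : ∀ N i, i < N → 0 ≤ xN N i)
    (hconv : ∀ i, Tendsto (fun N : ℕ => xN N i / (N : ℝ)) atTop (nhds (x i)))
    (hsumconv : Tendsto (fun N : ℕ => (∑ i ∈ Finset.range N, xN N i) / (N : ℝ))
      atTop (nhds γ)) :
    TendstoLocallyUniformly
      (fun (N : ℕ) (z : ℂ) => ∏ i ∈ Finset.range N, (1 - ((xN N i / (N : ℝ) : ℝ) : ℂ) * z))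
      (fun z : ℂ => Complex.exp (-(γ : ℂ) * z) *
        ∏' i : ℕ, Complex.exp ((x i : ℂ) * z) * (1 - (x i : ℂ) * z))
      atTop := by
  have hbound : ∀ᶠ N in atTop, ∀ k, |scaledTuple (xN N) N k| ≤ (γ + 1) / (k + 1) := by
    filter_upwards [hsumconv.eventually (eventually_le_nhds (lt_add_one γ))] with N hN k
    exact (abs_scaledTuple_le_div (hNdec N) (hNnn N) k).trans (by gcongr)
  have hbound_lim (k : ℕ) : |x k| ≤ (γ + 1) / (k + 1) :=
    le_of_tendsto (tendsto_scaledTuple (hconv k)).abs (hbound.mono fun _ hN => hN k)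
  simp only [prod_range_one_sub_mul_eq_exp_mul_tprod]
  rw [tendstoLocallyUniformly_iff_forall_tendsto]
  intro z
  have hlimit : Tendsto (fun w => Complex.exp (-γ * w) * ∏' i, weierstrassFactorOne (x i * w))
      (𝓝 z) (𝓝 (Complex.exp (-γ * z) * ∏' i, weierstrassFactorOne (x i * z))) :=
    ((continuous_const.mul continuous_id).cexp.tendsto z).mul
      (tendsto_tprod_weierstrassFactorOne (a := fun _ => x) (fun _ => tendsto_const_nhds)
        tendsto_id (Eventually.of_forall fun _ => hbound_lim))
  refine (Tendsto.prodMk_nhds (hlimit.comp tendsto_snd) ?_).mono_right (nhds_le_uniformity _)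
  exact (((hsumconv.comp tendsto_fst).ofReal.neg.mul tendsto_snd).cexp).mul
    (tendsto_tprod_weierstrassFactorOne (fun k => (tendsto_scaledTuple (hconv k)).comp tendsto_fst)
      tendsto_snd (hbound.prod_inl _))

/-- Convergence of rescaled reverse characteristic polynomials to the entire function
`E_+(z;(x,γ)) = e^{-γz} ∏_j e^{x_j z}(1 - x_j z)`, uniformly on compact subsets of `ℂ`,
given convergence of the embedded tuples in the boundary space `Ω_+`. -/
theorem charPoly_tendstoLocallyUniformly
    (xN : ℕ → ℕ → ℝ) (x : ℕ → ℝ) (γ : ℝ)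
    (hNdec : ∀ N, ∀ i j, i ≤ j → j < N → xN N j ≤ xN N i)
    (hNnn : ∀ N i, i < N → 0 ≤ xN N i)
    (hdec : ∀ i j, i ≤ j → x j ≤ x i) (hnn : ∀ i, 0 ≤ x i)
    (hconv : ∀ i, Tendsto (fun N : ℕ => xN N i / (N : ℝ)) atTop (nhds (x i)))
    (hsum : Summable x) (hγ : (∑' i, x i) ≤ γ)
    (hsumconv : Tendsto (fun N : ℕ => (∑ i ∈ Finset.range N, xN N i) / (N : ℝ))
      atTop (nhds γ)) :
    TendstoLocallyUniformly
      (fun (N : ℕ) (z : ℂ) => ∏ i ∈ Finset.range N, (1 - ((xN N i / (N : ℝ) : ℝ) : ℂ) * z))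
      (fun z : ℂ => Complex.exp (-(γ : ℂ) * z) *
        ∏' i : ℕ, Complex.exp ((x i : ℂ) * z) * (1 - (x i : ℂ) * z))
      atTop :=
  charPoly_tendstoLocallyUniformly_general xN x γ hNdec hNnn hconv hsumconv
end

section
/- Let X₁, X₂ be locally compact Polish spaces and let K : X₁ → X₂ be a Markov kernel such that the induced map on bounded measurable functions sends C₀(X₂) into C₀(X₁) (Feller kernel). Suppose M : M_p(X₁) → M_p(X₂), μ ↦ μK is injective on probability measures, i.e. μK = νK implies μ = ν. If a finite signed measure μ on X₁ annihilates KC₀(X₂) (i.e. ∫ (Kf) dμ = 0 for all f ∈ C₀(X₂)), then μK = 0 as a signed measure. -/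
/-!
Since `∫ f d(μK) = ∫ (Kf) dμ`, the hypothesis says that `μ₁K` and `μ₂K` integrate every
compactly supported continuous function alike. Finite measures on a locally compact Polish space
are regular, so the uniqueness part of the Riesz–Markov–Kakutani theorem identifies them.
-/

open MeasureTheory ProbabilityTheory

namespace MeasureTheory.Measure

theorem integral_comp {X Y E : Type*} [MeasurableSpace X] [MeasurableSpace Y]
    [NormedAddCommGroup E] [NormedSpace ℝ E] (κ : Kernel X Y) (μ : Measure X) {f : Y → E}
    (hf : Integrable f (κ ∘ₘ μ)) :
    ∫ y, f y ∂(κ ∘ₘ μ) = ∫ x, ∫ y, f y ∂(κ x) ∂μ := by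
  rw [comp_eq_comp_const_apply] at hf ⊢
  simpa using Kernel.integral_comp hf

end MeasureTheory.Measure

theorem signed_measure_annihilates_kernel_general {X₁ X₂ : Type*}
    [MeasurableSpace X₁]
    [TopologicalSpace X₂] [PolishSpace X₂] [LocallyCompactSpace X₂]
    [MeasurableSpace X₂] [BorelSpace X₂]
    (K : Kernel X₁ X₂) [IsMarkovKernel K]
    (μ₁ μ₂ : Measure X₁) [IsFiniteMeasure μ₁] [IsFiniteMeasure μ₂]
    (hann : ∀ f : ZeroAtInftyContinuousMap X₂ ℝ,
      ∫ x, (∫ y, f y ∂(K x)) ∂μ₁ = ∫ x, (∫ y, f y ∂(K x)) ∂μ₂) :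
    μ₁.bind (fun a => K a) = μ₂.bind (fun a => K a) := by
  refine Measure.ext_of_integral_eq_on_compactlySupported fun f => ?_
  have integral_bind (μ : Measure X₁) [IsFiniteMeasure μ] :
      ∫ y, f y ∂(μ.bind fun a => K a) = ∫ x, ∫ y, f y ∂(K x) ∂μ :=
    Measure.integral_comp K μ f.integrable
  rw [integral_bind μ₁, integral_bind μ₂]
  exact hann ⟨f, f.hasCompactSupport.is_zero_at_infty⟩

/-- Key step of the density lemma: if a finite signed measure `μ = μ₁ - μ₂` on `X₁`
annihilates `K C₀(X₂)` for a Feller Markov kernel `K : X₁ → X₂` whose induced map is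
injective on probability measures, then `μK = 0`, i.e. `μ₁K = μ₂K`. -/
theorem signed_measure_annihilates_kernel {X₁ X₂ : Type*}
    [TopologicalSpace X₁] [PolishSpace X₁] [LocallyCompactSpace X₁]
    [MeasurableSpace X₁] [BorelSpace X₁]
    [TopologicalSpace X₂] [PolishSpace X₂] [LocallyCompactSpace X₂]
    [MeasurableSpace X₂] [BorelSpace X₂]
    (K : Kernel X₁ X₂) [IsMarkovKernel K]
    (hFeller : ∀ f : ZeroAtInftyContinuousMap X₂ ℝ,
      ∃ g : ZeroAtInftyContinuousMap X₁ ℝ, ∀ x, g x = ∫ y, f y ∂(K x))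
    (hinj : ∀ p q : Measure X₁, IsProbabilityMeasure p → IsProbabilityMeasure q →
      p.bind (fun a => K a) = q.bind (fun a => K a) → p = q)
    (μ₁ μ₂ : Measure X₁) [IsFiniteMeasure μ₁] [IsFiniteMeasure μ₂]
    (hann : ∀ f : ZeroAtInftyContinuousMap X₂ ℝ,
      ∫ x, (∫ y, f y ∂(K x)) ∂μ₁ = ∫ x, (∫ y, f y ∂(K x)) ∂μ₂) :
    μ₁.bind (fun a => K a) = μ₂.bind (fun a => K a) :=
  signed_measure_annihilates_kernel_general K μ₁ μ₂ hann
end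

section
/- Suppose (a_i)_{i≥1} and, for each N, (a_i^{(N)})_{i≥1} are nonincreasing nonnegative sequences with a_i^{(N)} = 0 for i > N, such that a_i^{(N)} → a_i for each i and ∑_{i=1}^∞ a_i^{(N)} → ∑_{i=1}^∞ a_i < ∞ as N → ∞, with sup_N ∑_i a_i^{(N)} < ∞. Then ∑_{i=1}^∞ (a_i^{(N)} − a_i)² → 0 as N → ∞. -/
open Filter

set_option maxHeartbeats 1000000

/-- Deterministic core of the `ℓ²`-convergence of the embedded particle systems:
if nonincreasing nonnegative sequences `aN N`, vanishing beyond index `N`, converge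
coordinatewise to a summable nonincreasing nonnegative sequence `a`, their total sums
converge to `∑ a` and are uniformly bounded, then `∑_i (aN N i - a i)² → 0`. -/
theorem l2_convergence_of_embedded (a : ℕ → ℝ) (aN : ℕ → ℕ → ℝ)
    (ha : ∀ i j, i ≤ j → a j ≤ a i) (hann : ∀ i, 0 ≤ a i)
    (haN : ∀ N, ∀ i j, i ≤ j → aN N j ≤ aN N i) (haNnn : ∀ N i, 0 ≤ aN N i)
    (hzero : ∀ N i, N < i → aN N i = 0)
    (hconv : ∀ i, Tendsto (fun N => aN N i) atTop (nhds (a i)))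
    (hsum : Summable a)
    (hsumconv : Tendsto (fun N => ∑' i, aN N i) atTop (nhds (∑' i, a i)))
    (hbdd : ∃ Cb : ℝ, ∀ N, (∑' i, aN N i) ≤ Cb) :
    Tendsto (fun N => ∑' i, (aN N i - a i) ^ 2) atTop (nhds 0) := by
  obtain ⟨Cb, hCb⟩ := hbdd
  set S := ∑' i, a i with hSdef
  have hS0 : 0 ≤ S := tsum_nonneg hann
  have haNsum : ∀ N, Summable (aN N) := fun N =>
    summable_of_ne_finset_zero (s := Finset.range (N + 1)) (fun i hi => by
      apply hzero
      simpa [Nat.lt_succ_iff, not_le] using (Finset.mem_range.not.1 hi))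
  have hCb0 : 0 ≤ Cb := le_trans (tsum_nonneg (haNnn 0)) (hCb 0)
  have ha2sum : Summable (fun i => (a i) ^ 2) := by
    apply Summable.of_nonneg_of_le (fun i => sq_nonneg _) (fun i => ?_) (hsum.mul_left (a 0))
    have h1 := ha 0 i (Nat.zero_le i)
    have h2 := hann i
    nlinarith
  have haN2sum : ∀ N, Summable (fun i => (aN N i) ^ 2) := fun N =>
    summable_of_ne_finset_zero (s := Finset.range (N + 1)) (fun i hi => by
      rw [hzero N i (by simpa [Nat.lt_succ_iff, not_le] using (Finset.mem_range.not.1 hi))]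
      ring)
  have hfsum : ∀ N, Summable (fun i => (aN N i - a i) ^ 2) := by
    intro N
    apply Summable.of_nonneg_of_le (fun i => sq_nonneg _) (fun i => ?_)
      (((haN2sum N).mul_left 2).add (ha2sum.mul_left 2))
    nlinarith [sq_nonneg (aN N i + a i)]
  -- tail of aN is bounded by the full sum
  have htail_aN : ∀ N M, (∑' i, aN N (i + M)) ≤ Cb := by
    intro N M
    have h := (Summable.sum_add_tsum_nat_add M (haNsum N)).symm
    have hhead : 0 ≤ ∑ i ∈ Finset.range M, aN N i :=
      Finset.sum_nonneg fun i _ => haNnn N i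
    have := hCb N
    linarith
  have htail_a : ∀ M, (∑' i, a (i + M)) ≤ S := by
    intro M
    have h := (Summable.sum_add_tsum_nat_add M hsum).symm
    have hhead : 0 ≤ ∑ i ∈ Finset.range M, a i :=
      Finset.sum_nonneg fun i _ => hann i
    simp only [← hSdef] at h
    linarith
  -- tail estimate
  have htail : ∀ N M, (∑' i, (aN N (i + M) - a (i + M)) ^ 2)
      ≤ 2 * (aN N M * Cb) + 2 * (a M * S) := by
    intro N M
    have s1 : Summable (fun i => aN N (i + M)) := (summable_nat_add_iff M).2 (haNsum N)
    have s2 : Summable (fun i => (aN N (i + M)) ^ 2) := (summable_nat_add_iff M).2 (haN2sum N)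
    have s3 : Summable (fun i => a (i + M)) := (summable_nat_add_iff M).2 hsum
    have s4 : Summable (fun i => (a (i + M)) ^ 2) := (summable_nat_add_iff M).2 ha2sum
    have s5 : Summable (fun i => (aN N (i + M) - a (i + M)) ^ 2) :=
      (summable_nat_add_iff M).2 (hfsum N)
    have h1 : (∑' i, (aN N (i + M)) ^ 2) ≤ aN N M * Cb := by
      calc (∑' i, (aN N (i + M)) ^ 2) ≤ ∑' i, aN N M * aN N (i + M) := by
            apply Summable.tsum_le_tsum _ s2 (s1.mul_left _)
            intro i
            have h := haN N M (i + M) (Nat.le_add_left M i)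
            have := haNnn N (i + M)
            nlinarith
        _ = aN N M * ∑' i, aN N (i + M) := tsum_mul_left
        _ ≤ aN N M * Cb := by
            exact mul_le_mul_of_nonneg_left (htail_aN N M) (haNnn N M)
    have h2 : (∑' i, (a (i + M)) ^ 2) ≤ a M * S := by
      calc (∑' i, (a (i + M)) ^ 2) ≤ ∑' i, a M * a (i + M) := by
            apply Summable.tsum_le_tsum _ s4 (s3.mul_left _)
            intro i
            have h := ha M (i + M) (Nat.le_add_left M i)
            have := hann (i + M)
            nlinarith
        _ = a M * ∑' i, a (i + M) := tsum_mul_left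
        _ ≤ a M * S := mul_le_mul_of_nonneg_left (htail_a M) (hann M)
    calc (∑' i, (aN N (i + M) - a (i + M)) ^ 2)
        ≤ ∑' i, (2 * (aN N (i + M)) ^ 2 + 2 * (a (i + M)) ^ 2) := by
          apply Summable.tsum_le_tsum _ s5 ((s2.mul_left 2).add (s4.mul_left 2))
          intro i
          nlinarith [sq_nonneg (aN N (i + M) + a (i + M))]
      _ = 2 * (∑' i, (aN N (i + M)) ^ 2) + 2 * (∑' i, (a (i + M)) ^ 2) := by
          rw [Summable.tsum_add (s2.mul_left 2) (s4.mul_left 2), tsum_mul_left, tsum_mul_left]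
      _ ≤ 2 * (aN N M * Cb) + 2 * (a M * S) := by linarith
  rw [Metric.tendsto_atTop]
  intro ε hε
  set ε' : ℝ := min 1 (ε / (8 * (Cb + S + 1))) with hε'def
  have hdenom : 0 < 8 * (Cb + S + 1) := by linarith
  have hε'0 : 0 < ε' := lt_min one_pos (div_pos hε hdenom)
  -- choose M with a M < ε'
  have haM : ∃ M, a M < ε' := by
    have := hsum.tendsto_atTop_zero
    have h := this.eventually (gt_mem_nhds hε'0)
    exact h.exists
  obtain ⟨M, hM⟩ := haM
  -- head tends to 0
  have hhead : Tendsto (fun N => ∑ i ∈ Finset.range M, (aN N i - a i) ^ 2) atTop (nhds 0) := by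
    have : Tendsto (fun N => ∑ i ∈ Finset.range M, (aN N i - a i) ^ 2) atTop
        (nhds (∑ i ∈ Finset.range M, (a i - a i) ^ 2)) := by
      apply tendsto_finset_sum
      intro i _
      exact ((hconv i).sub tendsto_const_nhds).pow 2
    simpa using this
  have hheadev : ∀ᶠ N in atTop, (∑ i ∈ Finset.range M, (aN N i - a i) ^ 2) < ε / 2 := by
    have := hhead.eventually (gt_mem_nhds (half_pos hε))
    simpa using this
  have haNM : ∀ᶠ N in atTop, aN N M < a M + ε' :=
    (hconv M).eventually (gt_mem_nhds (lt_add_of_pos_right _ hε'0))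
  have hcomb := hheadev.and haNM
  rw [eventually_atTop] at hcomb
  obtain ⟨N₀, hN₀⟩ := hcomb
  refine ⟨N₀, fun N hN => ?_⟩
  obtain ⟨hhd, hNM⟩ := hN₀ N hN
  have hsplit := (Summable.sum_add_tsum_nat_add M (hfsum N)).symm
  have htailN := htail N M
  have htail_lt : 2 * (aN N M * Cb) + 2 * (a M * S) < ε / 2 := by
    have h1 : aN N M < 2 * ε' := by linarith
    have h2 : ε' ≤ ε / (8 * (Cb + S + 1)) := min_le_right _ _
    have h3 : ε' * (8 * (Cb + S + 1)) ≤ ε := by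
      rw [← le_div_iff₀ hdenom]; exact h2
    have hN0 : 0 ≤ aN N M := haNnn N M
    nlinarith [mul_le_mul_of_nonneg_left h1.le hCb0, hann M, mul_nonneg (hann M) hS0]
  have hFnn : 0 ≤ ∑' i, (aN N i - a i) ^ 2 := tsum_nonneg fun i => sq_nonneg _
  rw [Real.dist_eq, sub_zero, abs_of_nonneg hFnn]
  calc (∑' i, (aN N i - a i) ^ 2)
      = (∑ i ∈ Finset.range M, (aN N i - a i) ^ 2) + ∑' i, (aN N (i + M) - a (i + M)) ^ 2 :=
        hsplit
    _ < ε / 2 + ε / 2 := by linarith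
    _ = ε := by ring
end
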